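/- For every fractional stable allocation x₀ in which every job is fully allocated, there exists a relaxed unsplit stable assignment x such that for every job j, j's assigned machine in x is weakly preferred by j to j's least-preferred machine receiving positive allocation in x₀ (i.e., the rounding never worsens any job's worst allocated edge). -/

import Mathlib

open Finset

/-- An instance of the (relaxed) unsplittable stable allocation problem:
a finite bipartite graph between jobs `J` and machines `M` given by the
adjacency relation `adj`, sizes `qJ` and capacities `qM`, strict preferences
encoded by injective rank functions (smaller rank = more preferred), and a
dummy machine `md` adjacent to every job, ranked last by every job, whose
capacity exceeds the total size of all jobs. -/
structure Inst (J M : Type) [Fintype J] [DecidableEq J] [Fintype M] [DecidableEq M] where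
  adj : J → M → Prop
  qJ : J → ℝ
  qM : M → ℝ
  qJ_pos : ∀ j, 0 < qJ j
  qM_pos : ∀ m, 0 < qM m
  rankJ : J → M → ℕ
  rankM : M → J → ℕ
  rankJ_inj : ∀ j m m', adj j m → adj j m' → rankJ j m = rankJ j m' → m = m'
  rankM_inj : ∀ m j j', adj j m → adj j' m → rankM m j = rankM m j' → j = j'
  md : M
  md_adj : ∀ j, adj j md
  md_last : ∀ j m, adj j m → m ≠ md → rankJ j m < rankJ j md
  md_cap : (∑ j : J, qJ j) < qM md

variable {J M : Type} [Fintype J] [DecidableEq J] [Fintype M] [DecidableEq M]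

/-- `x(m)`: the total size assigned to machine `m` by the unsplit assignment
`a : J → M` (each job is assigned in its entirety to exactly one machine). -/
def load (I : Inst J M) (a : J → M) (m : M) : ℝ :=
  ∑ j ∈ Finset.univ.filter (fun j => a j = m), I.qJ j

/-- `a` is a valid unsplit assignment: every job is assigned along an edge. -/
def IsUnsplit (I : Inst J M) (a : J → M) : Prop :=
  ∀ j, I.adj j (a j)

/-- The relaxed capacity condition: for every machine `m` with at least one
assigned job, removing the least preferred job `j` assigned to `m` (largest
rank among assigned jobs) leaves `m` strictly below its capacity. -/
def IsRelaxed (I : Inst J M) (a : J → M) : Prop :=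
  ∀ m j, a j = m → (∀ j', a j' = m → I.rankM m j' ≤ I.rankM m j) →
    load I a m - I.qJ j < I.qM m

/-- Edge `jm` (with `a j ≠ m`) blocks `a`: `j` prefers `m` to its assigned
machine, and the total size of jobs assigned to `m` that `m` prefers to `j`
is below `m`'s capacity. -/
def Blocks (I : Inst J M) (a : J → M) (j : J) (m : M) : Prop :=
  I.adj j m ∧ a j ≠ m ∧ I.rankJ j m < I.rankJ j (a j) ∧
  (∑ j' ∈ Finset.univ.filter (fun j' => a j' = m ∧ I.rankM m j' < I.rankM m j), I.qJ j')
    < I.qM m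

/-- A relaxed unsplit stable assignment. -/
def IsStable (I : Inst J M) (a : J → M) : Prop :=
  IsUnsplit I a ∧ IsRelaxed I a ∧ ∀ j m, ¬ Blocks I a j m

/-- Machine `m` weakly prefers `a1` to `a2` (lexicographic order): either the
sets of jobs assigned to `m` coincide, or the best job (in `m`'s preference)
among the jobs assigned to `m` in exactly one of the two assignments is
assigned to `m` in `a1`. -/
def MPrefers (I : Inst J M) (m : M) (a1 a2 : J → M) : Prop :=
  (∀ j, a1 j = m ↔ a2 j = m) ∨
  ∃ j, a1 j = m ∧ a2 j ≠ m ∧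
    ∀ j', ((a1 j' = m ∧ a2 j' ≠ m) ∨ (a2 j' = m ∧ a1 j' ≠ m)) →
      I.rankM m j ≤ I.rankM m j'

/-- Job `j` weakly prefers its machine in `a1` to its machine in `a2`. -/
def JPrefers (I : Inst J M) (j : J) (a1 a2 : J → M) : Prop :=
  I.rankJ j (a1 j) ≤ I.rankJ j (a2 j)

/-- A machine-optimal relaxed unsplit stable assignment. -/
def MOptimal (I : Inst J M) (a : J → M) : Prop :=
  IsStable I a ∧ ∀ a', IsStable I a' → ∀ m, MPrefers I m a a'

/-- A job-optimal relaxed unsplit stable assignment. -/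
def JOptimal (I : Inst J M) (a : J → M) : Prop :=
  IsStable I a ∧ ∀ a', IsStable I a' → ∀ j, JPrefers I j a a'

/-- The size `|x|` of an unsplit assignment: total size of the jobs assigned
to a real (non-dummy) machine. -/
def totalSize (I : Inst J M) (a : J → M) : ℝ :=
  ∑ j ∈ Finset.univ.filter (fun j => a j ≠ I.md), I.qJ j

/-- `x(j)`: total allocation of job `j`. -/
def loadJ (I : Inst J M) (x : J → M → ℝ) (j : J) : ℝ := ∑ m, x j m

/-- `x(m)`: total allocation on machine `m`. -/
def loadM (I : Inst J M) (x : J → M → ℝ) (m : M) : ℝ := ∑ j, x j m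

/-- A (fractional) stable allocation: a feasible allocation supported on the
edges such that for every edge `jm` with `x(jm) < q(j)`, either `j` is fully
allocated on edges weakly preferred to `jm`, or `m` is fully allocated on
edges weakly preferred to `jm`. -/
def FracStable (I : Inst J M) (x : J → M → ℝ) : Prop :=
  (∀ j m, ¬ I.adj j m → x j m = 0) ∧
  (∀ j m, 0 ≤ x j m ∧ x j m ≤ I.qJ j) ∧
  (∀ j, loadJ I x j ≤ I.qJ j) ∧
  (∀ m, loadM I x m ≤ I.qM m) ∧
  (∀ j m, I.adj j m → x j m < I.qJ j →
    (∑ m' ∈ Finset.univ.filter (fun m' => I.rankJ j m' ≤ I.rankJ j m), x j m') = I.qJ j ∨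
    (∑ j' ∈ Finset.univ.filter (fun j' => I.rankM m j' ≤ I.rankM m j), x j' m) = I.qM m)

/-!
Run job-proposing deferred acceptance, starting with every job at its favourite machine: while some
machine `m` stays at or above capacity after removing its least preferred job `j`, that job is
rejected and moves to its next choice. Throughout, every machine a job prefers to its current one
is filled to capacity by jobs that machine prefers to it; this is exactly what rules out blocking
edges at the end, while termination with no rejection possible is the relaxed capacity condition.

The rounding guarantee holds because a job is never rejected by a machine on which `x0` puts
positive allocation. If `m` is filled by jobs it prefers to `j` while `x0 j m > 0`, then one of
those jobs `j'` gets less than `q(j')` from `m` in `x0`, so the stability of `x0` at `j'm` fails: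
`j'` is not saturated on machines it weakly prefers to `m` (as `m` is its best supported machine),
and `m` is not saturated on jobs it weakly prefers to `j'` (as `m` still gives something to `j`).
-/

section Rounding

variable (I : Inst J M)

def loadAbove (a : J → M) (m : M) (j : J) : ℝ :=
  ∑ j' ∈ univ.filter (fun j' => a j' = m ∧ I.rankM m j' < I.rankM m j), I.qJ j'

def IsRejected (a : J → M) (j : J) : Prop :=
  (∀ j', a j' = a j → I.rankM (a j) j' ≤ I.rankM (a j) j) ∧
    I.qM (a j) ≤ load I a (a j) - I.qJ j

def IsNextChoice (j : J) (m m' : M) : Prop :=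
  I.adj j m' ∧ I.rankJ j m < I.rankJ j m' ∧
    ∀ m'', I.adj j m'' → I.rankJ j m < I.rankJ j m'' → I.rankJ j m' ≤ I.rankJ j m''

structure RoundingInv (x0 : J → M → ℝ) (a : J → M) : Prop where
  adj : ∀ j, I.adj j (a j)
  le_loadAbove : ∀ j m, I.adj j m → I.rankJ j m < I.rankJ j (a j) →
    I.qM m ≤ loadAbove I a m j
  rankJ_le_of_pos : ∀ j m, 0 < x0 j m → I.rankJ j (a j) ≤ I.rankJ j m

def rankSum (a : J → M) : ℕ := ∑ j, I.rankJ j (a j)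

variable {I}

lemma Inst.rankJ_lt_of_le_of_ne {j : J} {m m' : M} (hm : I.adj j m) (hm' : I.adj j m')
    (hle : I.rankJ j m ≤ I.rankJ j m') (hne : m ≠ m') : I.rankJ j m < I.rankJ j m' :=
  hle.lt_of_ne fun h => hne (I.rankJ_inj j m m' hm hm' h)

lemma Inst.rankM_lt_of_le_of_ne {m : M} {j j' : J} (hj : I.adj j m) (hj' : I.adj j' m)
    (hle : I.rankM m j ≤ I.rankM m j') (hne : j ≠ j') : I.rankM m j < I.rankM m j' :=
  hle.lt_of_ne fun h => hne (I.rankM_inj m j j' hj hj' h)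

lemma Inst.exists_favourite (j : J) :
    ∃ m, I.adj j m ∧ ∀ m', I.adj j m' → I.rankJ j m ≤ I.rankJ j m' := by
  classical
  obtain ⟨m, hm, hmin⟩ := (univ.filter (I.adj j)).exists_min_image (I.rankJ j)
    ⟨I.md, by simp [I.md_adj j]⟩
  simp only [mem_filter, mem_univ, true_and] at hm hmin
  exact ⟨m, hm, hmin⟩

lemma Inst.exists_isNextChoice {j : J} {m : M} (hm : m ≠ I.md) (hadj : I.adj j m) :
    ∃ m', IsNextChoice I j m m' := by
  classical
  obtain ⟨m', hm', hmin⟩ :=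
    (univ.filter fun m' => I.adj j m' ∧ I.rankJ j m < I.rankJ j m').exists_min_image
      (I.rankJ j) ⟨I.md, by simp [I.md_adj j, I.md_last j m hadj hm]⟩
  simp only [mem_filter, mem_univ, true_and] at hm' hmin
  exact ⟨m', hm'.1, hm'.2, fun m'' h h' => hmin m'' ⟨h, h'⟩⟩

lemma load_le_sum_qJ (a : J → M) (m : M) : load I a m ≤ ∑ j, I.qJ j :=
  sum_le_sum_of_subset_of_nonneg (filter_subset _ _) fun j _ _ => (I.qJ_pos j).le

lemma IsRejected.ne_md {a : J → M} {j : J} (h : IsRejected I a j) : a j ≠ I.md := by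
  intro hmd
  have hover := h.2
  rw [hmd] at hover
  linarith [load_le_sum_qJ (I := I) a I.md, I.md_cap, I.qJ_pos j]

lemma load_sub_qJ_eq_loadAbove {a : J → M} (ha : ∀ j, I.adj j (a j)) {j : J}
    (hworst : ∀ j', a j' = a j → I.rankM (a j) j' ≤ I.rankM (a j) j) :
    load I a (a j) - I.qJ j = loadAbove I a (a j) j := by
  have hset : univ.filter (fun j' => a j' = a j) =
      insert j (univ.filter fun j' => a j' = a j ∧ I.rankM (a j) j' < I.rankM (a j) j) := by
    ext j'
    simp only [mem_filter, mem_univ, true_and, mem_insert]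
    constructor
    · intro h
      by_cases hj : j' = j
      · exact .inl hj
      · exact .inr ⟨h, I.rankM_lt_of_le_of_ne (h ▸ ha j') (ha j) (hworst j' h) hj⟩
    · rintro (rfl | ⟨h, -⟩) <;> trivial
  rw [load, hset, sum_insert (by simp), loadAbove]
  ring

lemma loadAbove_mono {a : J → M} {m : M} {j j' : J} (h : I.rankM m j ≤ I.rankM m j') :
    loadAbove I a m j ≤ loadAbove I a m j' :=
  sum_le_sum_of_subset_of_nonneg (fun k hk => by
    simp only [mem_filter] at hk ⊢
    exact ⟨hk.1, hk.2.1, hk.2.2.trans_le h⟩) fun k _ _ => (I.qJ_pos k).le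

lemma loadAbove_le_loadAbove_update {a : J → M} {m m' : M} {j k : J}
    (h : a j = m → I.rankM m k ≤ I.rankM m j) :
    loadAbove I a m k ≤ loadAbove I (Function.update a j m') m k := by
  refine sum_le_sum_of_subset_of_nonneg (fun i hi => ?_) fun i _ _ => (I.qJ_pos i).le
  simp only [mem_filter, mem_univ, true_and] at hi ⊢
  obtain rfl | hij := eq_or_ne i j
  · exact absurd (h hi.1) (not_le.2 hi.2)
  · rwa [Function.update_of_ne hij]

lemma rankSum_lt_update {a : J → M} {j : J} {m : M} (h : I.rankJ j (a j) < I.rankJ j m) :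
    rankSum I a < rankSum I (Function.update a j m) := by
  refine sum_lt_sum (fun i _ => ?_) ⟨j, mem_univ j, by simpa using h⟩
  obtain rfl | hij := eq_or_ne i j
  · simpa using h.le
  · simp [hij]

namespace FracStable

variable {x0 : J → M → ℝ}

lemma adj_of_pos (hx : FracStable I x0) {j : J} {m : M} (h : 0 < x0 j m) : I.adj j m := by
  by_contra h'
  rw [hx.1 j m h'] at h
  exact lt_irrefl 0 h

lemma add_sum_le_qM (hx : FracStable I x0) {j : J} {m : M} {s : Finset J} (hj : j ∉ s) :
    x0 j m + ∑ j' ∈ s, x0 j' m ≤ I.qM m :=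
  calc x0 j m + ∑ j' ∈ s, x0 j' m = ∑ j' ∈ insert j s, x0 j' m := by rw [sum_insert hj]
    _ ≤ loadM I x0 m :=
      sum_le_sum_of_subset_of_nonneg (subset_univ _) fun i _ _ => (hx.2.1 i m).1
    _ ≤ I.qM m := hx.2.2.2.1 m

lemma sum_rankJ_le_eq (hx : FracStable I x0) {j : J} {m : M} (hm : I.adj j m)
    (hbest : ∀ m', 0 < x0 j m' → I.rankJ j m ≤ I.rankJ j m') :
    ∑ m' ∈ univ.filter (fun m' => I.rankJ j m' ≤ I.rankJ j m), x0 j m' = x0 j m := by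
  refine sum_eq_single_of_mem m (by simp) fun m' hm' hne => ?_
  by_contra hne0
  have hpos : 0 < x0 j m' := (hx.2.1 j m').1.lt_of_ne' hne0
  exact hne (I.rankJ_inj j m' m (hx.adj_of_pos hpos) hm
    (le_antisymm (mem_filter.1 hm').2 (hbest m' hpos)))

lemma eq_zero_of_le_loadAbove (hx : FracStable I x0) {a : J → M} (ha : ∀ j, I.adj j (a j))
    (hbest : ∀ j m, 0 < x0 j m → I.rankJ j (a j) ≤ I.rankJ j m)
    {j : J} (hfull : I.qM (a j) ≤ loadAbove I a (a j) j) : x0 j (a j) = 0 := by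
  set m := a j
  set B := univ.filter fun j' => a j' = m ∧ I.rankM m j' < I.rankM m j
  by_contra hne
  have hpos : 0 < x0 j m := (hx.2.1 j m).1.lt_of_ne' hne
  have hB : ∑ j' ∈ B, x0 j' m < ∑ j' ∈ B, I.qJ j' := by
    have hle := hx.add_sum_le_qM (m := m) (show j ∉ B by simp [B])
    unfold loadAbove at hfull
    linarith
  obtain ⟨j', hj'B, hlt⟩ := exists_lt_of_sum_lt hB
  simp only [B, mem_filter, mem_univ, true_and] at hj'B
  obtain ⟨hj'm, hj'j⟩ := hj'B
  have hadj : I.adj j' m := hj'm ▸ ha j'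
  rcases hx.2.2.2.2 j' m hadj hlt with hsat | hsat
  · rw [hx.sum_rankJ_le_eq hadj fun m' h => hj'm ▸ hbest j' m' h] at hsat
    linarith
  · have hle := hx.add_sum_le_qM (m := m)
      (show j ∉ univ.filter fun i => I.rankM m i ≤ I.rankM m j' by simpa using hj'j)
    linarith

end FracStable

variable {x0 : J → M → ℝ}

lemma exists_roundingInv (hx : FracStable I x0) : ∃ a, RoundingInv I x0 a := by
  choose a ha hfav using I.exists_favourite
  exact ⟨a, ha, fun j m hm hlt => absurd (hfav j m hm) (not_le.2 hlt),
    fun j m h => hfav j m (hx.adj_of_pos h)⟩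

lemma RoundingInv.le_loadAbove_update {a : J → M} {j k : J} {m m' : M}
    (hinv : RoundingInv I x0 a) (hfull : I.qM (a j) ≤ loadAbove I a (a j) j)
    (hnext : IsNextChoice I j (a j) m') (hkm : I.adj k m)
    (hlt : I.rankJ k m < I.rankJ k (Function.update a j m' k)) :
    I.qM m ≤ loadAbove I (Function.update a j m') m k := by
  by_cases hm : m = a j ∧ I.rankM m j ≤ I.rankM m k
  · obtain ⟨rfl, hjk⟩ := hm
    calc I.qM (a j) ≤ loadAbove I a (a j) j := hfull
      _ ≤ loadAbove I (Function.update a j m') (a j) j :=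
        loadAbove_le_loadAbove_update fun _ => le_rfl
      _ ≤ loadAbove I (Function.update a j m') (a j) k := loadAbove_mono hjk
  · have hlt' : I.rankJ k m < I.rankJ k (a k) := by
      obtain rfl | hk := eq_or_ne k j
      · rw [Function.update_self] at hlt
        refine I.rankJ_lt_of_le_of_ne hkm (hinv.adj k) ?_ fun h => hm ⟨h, le_rfl⟩
        by_contra! h
        exact (hnext.2.2 m hkm h).not_gt hlt
      · rwa [Function.update_of_ne hk] at hlt
    calc I.qM m ≤ loadAbove I a m k := hinv.le_loadAbove k m hkm hlt'
      _ ≤ loadAbove I (Function.update a j m') m k :=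
        loadAbove_le_loadAbove_update fun h => (not_le.1 fun h' => hm ⟨h.symm, h'⟩).le

lemma RoundingInv.update {a : J → M} {j : J} {m' : M} (hx : FracStable I x0)
    (hinv : RoundingInv I x0 a) (hrej : IsRejected I a j) (hnext : IsNextChoice I j (a j) m') :
    RoundingInv I x0 (Function.update a j m') := by
  have hfull : I.qM (a j) ≤ loadAbove I a (a j) j :=
    load_sub_qJ_eq_loadAbove hinv.adj hrej.1 ▸ hrej.2
  have hzero : x0 j (a j) = 0 := hx.eq_zero_of_le_loadAbove hinv.adj hinv.rankJ_le_of_pos hfull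
  refine ⟨fun k => ?_, fun k m hkm hlt => hinv.le_loadAbove_update hfull hnext hkm hlt,
    fun k m hpos => ?_⟩
  · obtain rfl | hk := eq_or_ne k j
    · simpa using hnext.1
    · simpa [hk] using hinv.adj k
  · obtain rfl | hk := eq_or_ne k j
    · rw [Function.update_self]
      refine hnext.2.2 m (hx.adj_of_pos hpos) (I.rankJ_lt_of_le_of_ne (hinv.adj k)
        (hx.adj_of_pos hpos) (hinv.rankJ_le_of_pos k m hpos) ?_)
      rintro rfl
      exact hpos.ne' hzero
    · rw [Function.update_of_ne hk]
      exact hinv.rankJ_le_of_pos k m hpos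

lemma exists_roundingInv_forall_not_isRejected (hx : FracStable I x0) :
    ∃ a, RoundingInv I x0 a ∧ ∀ j, ¬ IsRejected I a j := by
  classical
  obtain ⟨a₀, ha₀⟩ := exists_roundingInv hx
  obtain ⟨a, ha, hmax⟩ :=
    (univ.filter (RoundingInv I x0)).exists_max_image (rankSum I) ⟨a₀, by simpa using ha₀⟩
  simp only [mem_filter, mem_univ, true_and] at ha hmax
  refine ⟨a, ha, fun j hrej => ?_⟩
  obtain ⟨m', hnext⟩ := I.exists_isNextChoice hrej.ne_md (ha.adj j)
  exact (rankSum_lt_update hnext.2.1).not_ge (hmax _ (ha.update hx hrej hnext))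

lemma RoundingInv.isStable {a : J → M} (ha : RoundingInv I x0 a)
    (hrej : ∀ j, ¬ IsRejected I a j) : IsStable I a := by
  refine ⟨ha.adj, fun m j hj hworst => ?_, fun j m ⟨hadj, _, hlt, hsum⟩ => ?_⟩
  · subst hj
    by_contra! h
    exact hrej j ⟨hworst, h⟩
  · exact (ha.le_loadAbove j m hadj hlt).not_gt hsum

end Rounding

theorem rounding_exists_general (I : Inst J M) (x0 : J → M → ℝ)
    (hx0 : FracStable I x0) :
    ∃ a : J → M, IsStable I a ∧
      ∀ j mr, 0 < x0 j mr → (∀ m', 0 < x0 j m' → I.rankJ j m' ≤ I.rankJ j mr) →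
        I.rankJ j (a j) ≤ I.rankJ j mr := by
  obtain ⟨a, ha, hrej⟩ := exists_roundingInv_forall_not_isRejected hx0
  exact ⟨a, ha.isStable hrej, fun j mr hpos _ => ha.rankJ_le_of_pos j mr hpos⟩

/-- every fractional stable allocation with all jobs fully
allocated can be rounded to a relaxed unsplit stable assignment in which each
job is assigned to a machine it weakly prefers to its least-preferred machine
receiving positive allocation in the fractional solution. -/
theorem rounding_exists (I : Inst J M) (x0 : J → M → ℝ)
    (hx0 : FracStable I x0) (hfull : ∀ j, loadJ I x0 j = I.qJ j) :
    ∃ a : J → M, IsStable I a ∧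
      ∀ j mr, 0 < x0 j mr → (∀ m', 0 < x0 j m' → I.rankJ j m' ≤ I.rankJ j mr) →
        I.rankJ j (a j) ≤ I.rankJ j mr :=
  rounding_exists_general I x0 hx0
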